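/- Conversely, if A is a negation algebra (¬¬x = x and ¬ has at most one fixed point) and F = {a} for some a ∈ A with ¬a ≠ a, then F is a deductive filter for the rules {x,¬x}⊢y, {x}⊢¬¬x, {¬¬x}⊢x, and the Suszko congruence of F (the intersection of the Leibniz congruences of all deductive filters containing F) is the identity relation on A. -/

import Mathlib

/-!
A filter containing `a` never contains `¬a`, and `{a}` as well as every `{a, c}` with `c` neither
`¬a` nor a fixed point is one. A congruence compatible with such a filter relates `x` only to
elements sharing its membership, and the same for `¬x`; testing against `{a}` and `{a, x}` pins
down every `x` that is not a fixed point, and the unique fixed point is then the only element left.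
-/

/-- A negation algebra: an involution with at most one fixed point. -/
def IsNegAlg {A : Type*} (neg : A → A) : Prop :=
  (∀ x, neg (neg x) = x) ∧ ∀ x y, neg x = x → neg y = y → x = y

/-- `G` is a deductive filter of the rules `{x, ¬x} ⊢ y`, `{x} ⊢ ¬¬x`,
`{¬¬x} ⊢ x` on the ¬-algebra `⟨A, neg⟩`. -/
def NegDedFilter {A : Type*} (neg : A → A) (G : Set A) : Prop :=
  (∀ a c : A, a ∈ G → neg a ∈ G → c ∈ G) ∧
  (∀ a : A, a ∈ G → neg (neg a) ∈ G) ∧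
  (∀ a : A, neg (neg a) ∈ G → a ∈ G)

/-- `x` and `y` are related by the Leibniz congruence of `G`: some congruence
of `⟨A, neg⟩` compatible with `G` relates them. -/
def LeibnizRelNeg {A : Type*} (neg : A → A) (G : Set A) (x y : A) : Prop :=
  ∃ θ : A → A → Prop, Equivalence θ ∧
    (∀ u v, θ u v → θ (neg u) (neg v)) ∧
    (∀ u v, θ u v → u ∈ G → v ∈ G) ∧
    θ x y

theorem negDedFilter_of_forall_neg_not_mem {A : Type*} {neg : A → A}
    (hinv : Function.Involutive neg) {G : Set A} (hG : ∀ b ∈ G, neg b ∉ G) :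
    NegDedFilter neg G :=
  ⟨fun b _ hb hnb => absurd hnb (hG b hb), fun b hb => by rwa [hinv b],
    fun b hb => by rwa [hinv b] at hb⟩

theorem negDedFilter_singleton {A : Type*} {neg : A → A} (hinv : Function.Involutive neg)
    {a : A} (ha : neg a ≠ a) : NegDedFilter neg {a} :=
  negDedFilter_of_forall_neg_not_mem hinv <| by
    rintro b rfl hb
    exact ha hb

theorem negDedFilter_pair {A : Type*} {neg : A → A} (hinv : Function.Involutive neg)
    {a c : A} (ha : neg a ≠ a) (hc : neg c ≠ c) (hca : c ≠ neg a) : NegDedFilter neg {a, c} :=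
  negDedFilter_of_forall_neg_not_mem hinv <| by
    rintro b (rfl | rfl) (hb | hb)
    · exact ha hb
    · exact hca hb.symm
    · exact hca (by rw [← hb, hinv])
    · exact hc hb

namespace LeibnizRelNeg

variable {A : Type*} {neg : A → A} {G : Set A} {x y : A}

theorem symm (h : LeibnizRelNeg neg G x y) : LeibnizRelNeg neg G y x :=
  let ⟨_, hθ, hneg, hG, hxy⟩ := h
  ⟨_, hθ, hneg, hG, hθ.symm hxy⟩

theorem map_neg (h : LeibnizRelNeg neg G x y) : LeibnizRelNeg neg G (neg x) (neg y) :=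
  let ⟨_, hθ, hneg, hG, hxy⟩ := h
  ⟨_, hθ, hneg, hG, hneg _ _ hxy⟩

theorem mem_iff (h : LeibnizRelNeg neg G x y) : x ∈ G ↔ y ∈ G :=
  let ⟨_, hθ, _, hG, hxy⟩ := h
  ⟨hG _ _ hxy, hG _ _ (hθ.symm hxy)⟩

end LeibnizRelNeg

/-- The Suszko congruence of `{a}`. -/
def SuszkoRelNeg {A : Type*} (neg : A → A) (a x y : A) : Prop :=
  ∀ G : Set A, NegDedFilter neg G → a ∈ G → LeibnizRelNeg neg G x y

namespace SuszkoRelNeg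

variable {A : Type*} {neg : A → A} {a x y : A}

theorem symm (h : SuszkoRelNeg neg a x y) : SuszkoRelNeg neg a y x :=
  fun G hG haG => (h G hG haG).symm

theorem eq_of_apply_ne (hinv : Function.Involutive neg) (ha : neg a ≠ a)
    (h : SuszkoRelNeg neg a x y) (hx : neg x ≠ x) : x = y := by
  have hsing := h {a} (negDedFilter_singleton hinv ha) rfl
  by_cases hxa : x = neg a
  · have hya : neg y = a := hsing.map_neg.mem_iff.1 (by rw [hxa, hinv a]; rfl)
    rw [hxa, ← hya, hinv y]
  · have hy : y ∈ ({a, x} : Set A) :=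
      (h _ (negDedFilter_pair hinv ha hx hxa) (Set.mem_insert a _)).mem_iff.1
        (Set.mem_insert_of_mem a rfl)
    rcases hy with rfl | rfl
    · exact hsing.mem_iff.2 rfl
    · rfl

end SuszkoRelNeg

/-- if `A` is a negation algebra and `a` is not a fixed point of
`¬`, then `{a}` is a deductive filter, and the Suszko congruence of `{a}` (the
intersection of the Leibniz congruences of all deductive filters containing
`{a}`) is the identity relation on `A`. -/
theorem singleton_filter_suszko_identity
    {A : Type*} (neg : A → A) (h : IsNegAlg neg) (a : A) (ha : neg a ≠ a) :
    NegDedFilter neg ({a} : Set A) ∧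
    (∀ x y : A,
      (∀ G : Set A, NegDedFilter neg G → a ∈ G → LeibnizRelNeg neg G x y) →
      x = y) := by
  obtain ⟨hinv, hfix⟩ := h
  refine ⟨negDedFilter_singleton hinv ha, fun x y hxy => ?_⟩
  by_cases hx : neg x = x
  · by_cases hy : neg y = y
    · exact hfix x y hx hy
    · exact (SuszkoRelNeg.eq_of_apply_ne hinv ha (SuszkoRelNeg.symm hxy) hy).symm
  · exact SuszkoRelNeg.eq_of_apply_ne hinv ha hxy hx
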